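/- arXiv:2004.02567 — 4 statements merged into one kernel-verified Lean document; each statement's English description precedes it below -/
import Mathlib

section
/- Let R ∈ [0, π/2) and let k be a natural number with k ≥ 1 + 1/(cot R)^2. Then for every d ∈ [0, R] and every t ∈ [0, 1], sin(d·t) ≤ t^(1/k) · sin(d). -/
/-!
For `0 < x < π/2` the derivative of `sin x ^ k / x` has the sign of `k x cos x - sin x`, which is
positive once `k cos x ≥ 1` because `sin x < x`. The hypothesis on `k` says `k ≥ 1 / cos² R`,
so `k cos x ≥ 1` on `(0, R]`, and `sin x ^ k / x` is monotone there. Comparing `x = d t` with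
`x = d` gives `sin (d t) ^ k ≤ t sin d ^ k`; taking `k`-th roots finishes.
-/

open Real Set

lemma Real.one_div_cot_sq (x : ℝ) : 1 / cot x ^ 2 = tan x ^ 2 := by
  rw [← tan_inv_eq_cot, inv_pow, one_div, inv_inv]

lemma Real.one_le_mul_cos_of_one_add_tan_sq_le {x c : ℝ} (hx : 0 < cos x)
    (h : 1 + tan x ^ 2 ≤ c) : 1 ≤ c * cos x := by
  have hc : (cos x ^ 2)⁻¹ ≤ c := by rwa [← inv_one_add_tan_sq hx.ne', inv_inv]
  calc 1 ≤ (cos x ^ 2)⁻¹ * cos x := by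
        rw [pow_two, mul_inv, inv_mul_cancel_right₀ hx.ne']
        exact one_le_inv₀ hx |>.mpr (cos_le_one x)
    _ ≤ c * cos x := by gcongr

lemma Real.sin_lt_mul_self_mul_cos {x c : ℝ} (hx : 0 < x) (h : 1 ≤ c * cos x) :
    sin x < c * (x * cos x) :=
  calc sin x < x := sin_lt hx
    _ ≤ x * (c * cos x) := le_mul_of_one_le_right hx.le h
    _ = c * (x * cos x) := by ring

lemma Real.hasDerivAt_sin_pow_div_self (k : ℕ) {x : ℝ} (hx : x ≠ 0) :
    HasDerivAt (fun y => sin y ^ k / y)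
      ((k * sin x ^ (k - 1) * cos x * x - sin x ^ k * 1) / x ^ 2) x :=
  ((hasDerivAt_sin x).pow k).div (hasDerivAt_id x) hx

lemma Real.monotoneOn_sin_pow_div_self {k : ℕ} {a : ℝ} (ha : a ≤ π) (hka : 1 ≤ k * cos a) :
    MonotoneOn (fun x => sin x ^ k / x) (Ioc 0 a) := by
  have hk : k ≠ 0 := by rintro rfl; norm_num at hka
  refine monotoneOn_of_hasDerivWithinAt_nonneg (convex_Ioc 0 a) ?_
    (fun x hx => (hasDerivAt_sin_pow_div_self k (interior_subset hx).1.ne').hasDerivWithinAt) ?_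
  · exact ((continuous_sin.pow k).continuousOn).div continuousOn_id fun x hx => hx.1.ne'
  · rw [interior_Ioc]
    rintro x ⟨hx0, hxa⟩
    have hsin : 0 ≤ sin x := sin_nonneg_of_nonneg_of_le_pi hx0.le (hxa.le.trans ha)
    have hcos : cos a ≤ cos x := cos_le_cos_of_nonneg_of_le_pi hx0.le ha hxa.le
    have hkey : sin x < k * (x * cos x) :=
      sin_lt_mul_self_mul_cos hx0 (hka.trans (by gcongr))
    have hnum : k * sin x ^ (k - 1) * cos x * x - sin x ^ k * 1
        = sin x ^ (k - 1) * (k * (x * cos x) - sin x) := by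
      rw [← Nat.sub_one_add_one hk, pow_succ, Nat.add_sub_cancel]; ring
    rw [hnum]
    exact div_nonneg (mul_nonneg (pow_nonneg hsin _) (sub_pos.mpr hkey).le) (sq_nonneg x)

lemma Real.sin_mul_pow_le_mul_sin_pow {k : ℕ} {a d t : ℝ} (ha : a ≤ π) (hka : 1 ≤ k * cos a)
    (hd : d ∈ Icc 0 a) (ht : t ∈ Icc 0 1) : sin (d * t) ^ k ≤ t * sin d ^ k := by
  have hk : k ≠ 0 := by rintro rfl; norm_num at hka
  have hsind : 0 ≤ sin d := sin_nonneg_of_nonneg_of_le_pi hd.1 (hd.2.trans ha)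
  rcases (mul_nonneg hd.1 ht.1).eq_or_lt with hdt | hdt
  · rw [← hdt, sin_zero, zero_pow hk]
    exact mul_nonneg ht.1 (pow_nonneg hsind k)
  have hdt_le : d * t ≤ d := mul_le_of_le_one_right hd.1 ht.2
  have hd0 : 0 < d := hdt.trans_le hdt_le
  have hmono := monotoneOn_sin_pow_div_self ha hka ⟨hdt, hdt_le.trans hd.2⟩ ⟨hd0, hd.2⟩ hdt_le
  rw [div_le_div_iff₀ hdt hd0] at hmono
  nlinarith

lemma Real.le_rpow_one_div_mul_of_pow_le {x y t : ℝ} {k : ℕ} (hk : k ≠ 0) (hx : 0 ≤ x)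
    (hy : 0 ≤ y) (ht : 0 ≤ t) (h : x ^ k ≤ t * y ^ k) : x ≤ t ^ ((1 : ℝ) / k) * y := by
  rwa [← pow_le_pow_iff_left₀ hx (by positivity) hk, mul_pow, one_div,
    rpow_inv_natCast_pow ht hk]

theorem sin_mul_le_rpow_mul_sin_general (R : ℝ) (hR : R < π / 2)
    (k : ℕ) (hk : (1 : ℝ) + 1 / Real.cot R ^ 2 ≤ (k : ℝ)) :
    ∀ d ∈ Set.Icc (0 : ℝ) R, ∀ t ∈ Set.Icc (0 : ℝ) 1,
      Real.sin (d * t) ≤ t ^ ((1 : ℝ) / (k : ℝ)) * Real.sin d := by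
  intro d hd t ht
  have hRπ : R ≤ π := hR.le.trans (by linarith [pi_pos])
  have hcosR : 0 < cos R :=
    cos_pos_of_mem_Ioo ⟨by linarith [pi_pos, hd.1.trans hd.2], hR⟩
  have hkR : 1 ≤ k * cos R :=
    one_le_mul_cos_of_one_add_tan_sq_le hcosR (one_div_cot_sq R ▸ hk)
  have hk0 : k ≠ 0 := by rintro rfl; norm_num at hkR
  have hdπ : d ≤ π := hd.2.trans hRπ
  exact le_rpow_one_div_mul_of_pow_le hk0
    (sin_nonneg_of_nonneg_of_le_pi (mul_nonneg hd.1 ht.1)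
      ((mul_le_of_le_one_right hd.1 ht.2).trans hdπ))
    (sin_nonneg_of_nonneg_of_le_pi hd.1 hdπ) ht.1
    (sin_mul_pow_le_mul_sin_pow hRπ hkR hd ht)

theorem sin_mul_le_rpow_mul_sin (R : ℝ) (hR0 : 0 ≤ R) (hR : R < π / 2)
    (k : ℕ) (hk : (1 : ℝ) + 1 / Real.cot R ^ 2 ≤ (k : ℝ)) :
    ∀ d ∈ Set.Icc (0 : ℝ) R, ∀ t ∈ Set.Icc (0 : ℝ) 1,
      Real.sin (d * t) ≤ t ^ ((1 : ℝ) / (k : ℝ)) * Real.sin d :=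
  sin_mul_le_rpow_mul_sin_general R hR k hk
end

section
/- Let a, b, c ∈ [0, π] with a ≥ b and let γ ∈ [0, π]. Suppose hav c = hav(a − b) + sin a · sin b · hav γ (the law of haversines). If t ∈ [0,1] and k ≥ 2 is such that sin(d·t) ≤ t^(1/k)·sin d for all d ∈ [0, a], and a − b ∈ [0, π/2), then the quantity c_t defined by hav c_t = hav(t(a − b)) + sin(ta)·sin(tb)·hav γ satisfies hav c_t ≤ t^(2/k) · hav c. -/
/-! The sine hypothesis, applied at `a`, `b` and at the half angle `(a - b) / 2`, bounds each term
of the scaled law of haversines by `(t ^ (1 / k)) ^ 2 = t ^ (2 / k)` times the unscaled term: `hav` is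
a squared sine, and the other term is a product of two sines. -/

open Real

/-- The haversine function. -/
noncomputable def hav (θ : ℝ) : ℝ := Real.sin (θ / 2) ^ 2

lemma sin_mul_nonneg_of_mem_Icc {t x : ℝ} (ht : t ∈ Set.Icc (0 : ℝ) 1) (hx : x ∈ Set.Icc 0 π) :
    0 ≤ sin (t * x) :=
  sin_nonneg_of_nonneg_of_le_pi (mul_nonneg ht.1 hx.1)
    (by nlinarith [ht.1, ht.2, hx.1, hx.2])

lemma hav_mul_le_sq_mul_hav {t s θ : ℝ} (h0 : 0 ≤ sin (t * (θ / 2)))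
    (h : sin (t * (θ / 2)) ≤ s * sin (θ / 2)) : hav (t * θ) ≤ s ^ 2 * hav θ := by
  unfold hav
  rw [mul_div_assoc, ← mul_pow]
  exact pow_le_pow_left₀ h0 h 2

lemma add_mul_mul_le_sq_mul {u u' x x' y y' h s : ℝ} (hu : u' ≤ s ^ 2 * u)
    (hx0 : 0 ≤ x') (hx : x' ≤ s * x) (hy0 : 0 ≤ y') (hy : y' ≤ s * y) (hh : 0 ≤ h) :
    u' + x' * y' * h ≤ s ^ 2 * (u + x * y * h) := by
  have hxy : x' * y' ≤ s * x * (s * y) := mul_le_mul hx hy hy0 (hx0.trans hx)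
  calc u' + x' * y' * h ≤ s ^ 2 * u + s * x * (s * y) * h := by gcongr
    _ = s ^ 2 * (u + x * y * h) := by ring

lemma rpow_one_div_sq {t : ℝ} (ht : 0 ≤ t) (k : ℝ) : (t ^ (1 / k)) ^ 2 = t ^ (2 / k) := by
  rw [← rpow_natCast, ← rpow_mul ht]
  congr 1
  push_cast
  ring

theorem hav_scaled_triangle_bound_general
    (a b c γ : ℝ) (ha : a ∈ Set.Icc (0 : ℝ) π) (hb : b ∈ Set.Icc (0 : ℝ) π)
    (hab : b ≤ a)
    (hlaw : hav c = hav (a - b) + Real.sin a * Real.sin b * hav γ)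
    (t : ℝ) (ht : t ∈ Set.Icc (0 : ℝ) 1)
    (k : ℕ)
    (hsin : ∀ d ∈ Set.Icc (0 : ℝ) a, Real.sin (d * t) ≤ t ^ ((1 : ℝ) / (k : ℝ)) * Real.sin d)
    (ct : ℝ)
    (hct : hav ct = hav (t * (a - b)) + Real.sin (t * a) * Real.sin (t * b) * hav γ) :
    hav ct ≤ t ^ ((2 : ℝ) / (k : ℝ)) * hav c := by
  have hsin' : ∀ d ∈ Set.Icc (0 : ℝ) a, sin (t * d) ≤ t ^ ((1 : ℝ) / k) * sin d := fun d hd => by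
    simpa only [mul_comm] using hsin d hd
  have hhalf : (a - b) / 2 ∈ Set.Icc 0 a := ⟨by linarith, by linarith [hb.1]⟩
  have hhalf_π : (a - b) / 2 ∈ Set.Icc 0 π := ⟨hhalf.1, hhalf.2.trans ha.2⟩
  have hav_diff := hav_mul_le_sq_mul_hav (sin_mul_nonneg_of_mem_Icc ht hhalf_π) (hsin' _ hhalf)
  rw [hct, hlaw, ← rpow_one_div_sq ht.1]
  exact add_mul_mul_le_sq_mul hav_diff (sin_mul_nonneg_of_mem_Icc ht ha) (hsin' a ⟨ha.1, le_rfl⟩)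
    (sin_mul_nonneg_of_mem_Icc ht hb) (hsin' b ⟨hb.1, hab⟩) (sq_nonneg _)

theorem hav_scaled_triangle_bound
    (a b c γ : ℝ) (ha : a ∈ Set.Icc (0 : ℝ) π) (hb : b ∈ Set.Icc (0 : ℝ) π)
    (hc : c ∈ Set.Icc (0 : ℝ) π) (hγ : γ ∈ Set.Icc (0 : ℝ) π)
    (hab : b ≤ a)
    (hlaw : hav c = hav (a - b) + Real.sin a * Real.sin b * hav γ)
    (t : ℝ) (ht : t ∈ Set.Icc (0 : ℝ) 1)
    (k : ℕ) (hk : 2 ≤ k)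
    (hsin : ∀ d ∈ Set.Icc (0 : ℝ) a, Real.sin (d * t) ≤ t ^ ((1 : ℝ) / (k : ℝ)) * Real.sin d)
    (hab' : a - b < π / 2)
    (ct : ℝ)
    (hct : hav ct = hav (t * (a - b)) + Real.sin (t * a) * Real.sin (t * b) * hav γ) :
    hav ct ≤ t ^ ((2 : ℝ) / (k : ℝ)) * hav c :=
  hav_scaled_triangle_bound_general a b c γ ha hb hab hlaw t ht k hsin ct hct
end

section
/- Let a, b, c, c_t ∈ [0, π] with hav c_t ≤ t^(2/k) · hav c for some t ∈ [0,1] and k ≥ 2. Then c_t ≤ t^(1/k) · c. -/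
/-!
With `s = t^(1/k)`, the hypothesis reads `hav c_t ≤ s² · hav c`; taking square roots gives
`sin (c_t/2) ≤ s · sin (c/2)`. Since `sin` is concave on `[0, π]` and vanishes at `0`,
`s · sin (c/2) ≤ sin (s · c/2)`, and `sin` is increasing on `[0, π/2]`, so `c_t/2 ≤ s · c/2`.
-/

open Real

theorem ConcaveOn.mul_le_map_mul {E : Type*} [AddCommGroup E] [Module ℝ E] {s : Set E}
    {f : E → ℝ} (hf : ConcaveOn ℝ s f) (h0 : 0 ∈ s) (hf0 : 0 ≤ f 0) {x : E} (hx : x ∈ s)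
    {t : ℝ} (ht0 : 0 ≤ t) (ht1 : t ≤ 1) : t * f x ≤ f (t • x) := by
  have := hf.2 hx h0 ht0 (sub_nonneg.2 ht1) (add_sub_cancel t 1)
  simp only [smul_zero, add_zero, smul_eq_mul] at this
  linarith [mul_nonneg (sub_nonneg.2 ht1) hf0]

theorem Real.mul_sin_le_sin_mul {x t : ℝ} (hx : x ∈ Set.Icc 0 π) (ht0 : 0 ≤ t) (ht1 : t ≤ 1) :
    t * sin x ≤ sin (t * x) :=
  strictConcaveOn_sin_Icc.concaveOn.mul_le_map_mul ⟨le_rfl, pi_pos.le⟩ sin_zero.ge hx ht0 ht1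

theorem abs_sin_half_le_of_hav_le {x y s : ℝ} (hs : 0 ≤ s) (h : hav x ≤ s ^ 2 * hav y) :
    |sin (x / 2)| ≤ s * |sin (y / 2)| := by
  rw [← abs_of_nonneg hs, ← abs_mul, ← sq_le_sq, mul_pow]
  exact h

theorem le_mul_of_hav_le_sq_mul_hav {x c s : ℝ} (hx : x ∈ Set.Icc 0 π) (hc : c ∈ Set.Icc 0 π)
    (hs0 : 0 ≤ s) (hs1 : s ≤ 1) (h : hav x ≤ s ^ 2 * hav c) : x ≤ s * c := by
  have hx2 : x / 2 ∈ Set.Icc (-(π / 2)) (π / 2) := ⟨by linarith [hx.1, pi_pos], by linarith [hx.2]⟩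
  have hc2 : c / 2 ∈ Set.Icc 0 π := ⟨by linarith [hc.1], by linarith [hc.2, pi_pos]⟩
  have hsc2 : s * (c / 2) ∈ Set.Icc (-(π / 2)) (π / 2) :=
    ⟨by nlinarith [hc.1, pi_pos], by nlinarith [hc.1, hc.2]⟩
  have hsin : sin (x / 2) ≤ sin (s * (c / 2)) := calc
    sin (x / 2) = |sin (x / 2)| := (abs_of_nonneg (sin_nonneg_of_nonneg_of_le_pi
      (by linarith [hx.1]) (by linarith [hx.2, pi_pos]))).symm
    _ ≤ s * |sin (c / 2)| := abs_sin_half_le_of_hav_le hs0 h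
    _ = s * sin (c / 2) := by rw [abs_of_nonneg (sin_nonneg_of_nonneg_of_le_pi hc2.1 hc2.2)]
    _ ≤ sin (s * (c / 2)) := mul_sin_le_sin_mul hc2 hs0 hs1
  have := (strictMonoOn_sin.le_iff_le hx2 hsc2).1 hsin
  linarith

theorem dist_le_of_hav_le_general
    (c ct : ℝ)
    (hc : c ∈ Set.Icc (0 : ℝ) π) (hct : ct ∈ Set.Icc (0 : ℝ) π)
    (t : ℝ) (ht : t ∈ Set.Icc (0 : ℝ) 1) (k : ℕ)
    (h : hav ct ≤ t ^ ((2 : ℝ) / (k : ℝ)) * hav c) :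
    ct ≤ t ^ ((1 : ℝ) / (k : ℝ)) * c := by
  have hsq : t ^ ((2 : ℝ) / k) = (t ^ ((1 : ℝ) / k)) ^ 2 := by
    rw [← rpow_natCast, ← rpow_mul ht.1]
    ring_nf
  rw [hsq] at h
  exact le_mul_of_hav_le_sq_mul_hav hct hc (rpow_nonneg ht.1 _)
    (rpow_le_one ht.1 ht.2 (by positivity)) h

theorem dist_le_of_hav_le
    (a b c ct : ℝ) (ha : a ∈ Set.Icc (0 : ℝ) π) (hb : b ∈ Set.Icc (0 : ℝ) π)
    (hc : c ∈ Set.Icc (0 : ℝ) π) (hct : ct ∈ Set.Icc (0 : ℝ) π)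
    (t : ℝ) (ht : t ∈ Set.Icc (0 : ℝ) 1) (k : ℕ) (hk : 2 ≤ k)
    (h : hav ct ≤ t ^ ((2 : ℝ) / (k : ℝ)) * hav c) :
    ct ≤ t ^ ((1 : ℝ) / (k : ℝ)) * c :=
  dist_le_of_hav_le_general c ct hc hct t ht k h
end

section
/- Let C be a bounded metric space and f : C → C a nonexpansive map such that for every n ≥ 1 there exists β_n ∈ (0,1) with ρ(f(y), f(z)) ≤ β_n · ρ(y,z) whenever ρ(y,z) ≥ diam(C)/n. Then f is contractive in the sense of Rakotch. -/
/-- `f` is contractive in the sense of Rakotch: there is a decreasing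
`φ : [0, diam C] → [0,1]` with `φ s < 1` for `s > 0` and
`dist (f y) (f z) ≤ φ (dist y z) * dist y z`. -/
def RakotchSelf {C : Type*} [MetricSpace C] (f : C → C) : Prop :=
  ∃ φ : ℝ → ℝ,
    (∀ s t : ℝ, 0 ≤ s → s ≤ t → t ≤ Metric.diam (Set.univ : Set C) → φ t ≤ φ s) ∧
    (∀ s : ℝ, 0 ≤ s → s ≤ Metric.diam (Set.univ : Set C) → φ s ∈ Set.Icc (0 : ℝ) 1) ∧
    (∀ s : ℝ, 0 < s → s ≤ Metric.diam (Set.univ : Set C) → φ s < 1) ∧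
    ∀ y z : C, dist (f y) (f z) ≤ φ (dist y z) * dist y z

/-!
The modulus `φ s` is the supremum of the ratios `dist (f y) (f z) / dist y z` over the pairs with
`s ≤ dist y z`. It is antitone in `s` because the index set shrinks, and it is at most `β < 1`
for `s > 0` because all those pairs are contracted by a common factor `β`, which the hypothesis
provides for pairs at distance at least `diam C / n` once `n` is large.
-/

open Metric

section

variable {X Y : Type*} [MetricSpace X] [PseudoMetricSpace Y]

def UniformlyContractiveOnLargeDistances (f : X → Y) : Prop :=
  ∀ ε > 0, ∃ β < 1, ∀ y z : X, ε ≤ dist y z → dist (f y) (f z) ≤ β * dist y z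

noncomputable def contractionModulus (f : X → Y) (s : ℝ) : ℝ :=
  ⨆ p : {p : X × X // s ≤ dist p.1 p.2}, dist (f p.1.1) (f p.1.2) / dist p.1.1 p.1.2

namespace UniformlyContractiveOnLargeDistances

variable {f : X → Y}

theorem dist_le (hf : UniformlyContractiveOnLargeDistances f) (y z : X) :
    dist (f y) (f z) ≤ dist y z := by
  rcases eq_or_ne y z with rfl | hyz
  · simp
  obtain ⟨β, hβ, hcontr⟩ := hf (dist y z) (dist_pos.2 hyz)
  calc dist (f y) (f z) ≤ β * dist y z := hcontr y z le_rfl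
    _ ≤ dist y z := by nlinarith [dist_pos.2 hyz]

theorem bddAbove_range_dist_div_dist (hf : UniformlyContractiveOnLargeDistances f) (s : ℝ) :
    BddAbove (Set.range fun p : {p : X × X // s ≤ dist p.1 p.2} =>
      dist (f p.1.1) (f p.1.2) / dist p.1.1 p.1.2) :=
  ⟨1, Set.forall_mem_range.2 fun _ => div_le_one_of_le₀ (hf.dist_le _ _) dist_nonneg⟩

theorem contractionModulus_antitone (hf : UniformlyContractiveOnLargeDistances f) :
    Antitone (contractionModulus f) := fun s t hst =>
  Real.iSup_le (fun p => le_ciSup (hf.bddAbove_range_dist_div_dist s) ⟨p.1, hst.trans p.2⟩)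
    (Real.iSup_nonneg fun _ => by positivity)

theorem contractionModulus_mem_Icc (hf : UniformlyContractiveOnLargeDistances f) (s : ℝ) :
    contractionModulus f s ∈ Set.Icc (0 : ℝ) 1 :=
  ⟨Real.iSup_nonneg fun _ => by positivity,
    Real.iSup_le (fun _ => div_le_one_of_le₀ (hf.dist_le _ _) dist_nonneg) zero_le_one⟩

theorem contractionModulus_lt_one (hf : UniformlyContractiveOnLargeDistances f) {s : ℝ}
    (hs : 0 < s) : contractionModulus f s < 1 := by
  obtain ⟨β, hβ, hcontr⟩ := hf s hs
  refine (Real.iSup_le (fun p => ?_) (le_max_right β 0)).trans_lt (max_lt hβ one_pos)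
  have hpos : 0 < dist p.1.1 p.1.2 := hs.trans_le p.2
  exact (div_le_iff₀ hpos).2 ((hcontr _ _ p.2).trans (by gcongr; exact le_max_left β 0))

theorem dist_le_contractionModulus_mul (hf : UniformlyContractiveOnLargeDistances f) (y z : X) :
    dist (f y) (f z) ≤ contractionModulus f (dist y z) * dist y z := by
  rcases eq_or_ne y z with rfl | hyz
  · simp
  rw [← div_le_iff₀ (dist_pos.2 hyz)]
  exact le_ciSup (hf.bddAbove_range_dist_div_dist _) ⟨(y, z), le_rfl⟩

theorem rakotchSelf {f : X → X} (hf : UniformlyContractiveOnLargeDistances f) : RakotchSelf f :=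
  ⟨contractionModulus f, fun _ _ _ hst _ => hf.contractionModulus_antitone hst,
    fun s _ _ => hf.contractionModulus_mem_Icc s, fun _ hs _ => hf.contractionModulus_lt_one hs,
    hf.dist_le_contractionModulus_mul⟩

end UniformlyContractiveOnLargeDistances

end

theorem rakotch_of_uniform_contraction_on_large_distances_general
    {C : Type*} [MetricSpace C]
    (f : C → C)
    (h : ∀ n : ℕ, 1 ≤ n → ∃ β : ℝ, 0 < β ∧ β < 1 ∧
      ∀ y z : C, Metric.diam (Set.univ : Set C) / n ≤ dist y z →
        dist (f y) (f z) ≤ β * dist y z) :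
    RakotchSelf f := by
  refine UniformlyContractiveOnLargeDistances.rakotchSelf fun ε hε => ?_
  obtain ⟨n, hn⟩ := exists_nat_gt (diam (Set.univ : Set C) / ε)
  have hn_pos : (0 : ℝ) < n := (div_nonneg diam_nonneg hε.le).trans_lt hn
  have hdiam_div_le : diam (Set.univ : Set C) / n ≤ ε :=
    (div_le_iff₀ hn_pos).2 (by rw [mul_comm]; exact ((div_lt_iff₀ hε).1 hn).le)
  obtain ⟨β, -, hβ, hcontr⟩ := h n (by exact_mod_cast hn_pos)
  exact ⟨β, hβ, fun y z hyz => hcontr y z (hdiam_div_le.trans hyz)⟩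

theorem rakotch_of_uniform_contraction_on_large_distances
    {C : Type*} [MetricSpace C] (hbd : Bornology.IsBounded (Set.univ : Set C))
    (f : C → C) (hf : ∀ y z : C, dist (f y) (f z) ≤ dist y z)
    (h : ∀ n : ℕ, 1 ≤ n → ∃ β : ℝ, 0 < β ∧ β < 1 ∧
      ∀ y z : C, Metric.diam (Set.univ : Set C) / n ≤ dist y z →
        dist (f y) (f z) ≤ β * dist y z) :
    RakotchSelf f :=
  rakotch_of_uniform_contraction_on_large_distances_general f h
end
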